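/- arXiv:1710.10660 — 3 statements merged into one kernel-verified Lean document; each statement's English description precedes it below -/
import Mathlib

section
/- Let π be a permutation of length k, and let f_P : [k²] → ℝ be the sequence associated with a signed partition P of π as in the USPN construction. Then for every 0 ≤ m ≤ k−1, the set of all entries x ∈ [k²] satisfying m < f_P(x) < m+1 has exactly k elements, and the subsequence of f_P on these entries (in increasing index order) is order-isomorphic to π. -/
/-!
Split `[k²]` into the blocks `(r (i-1) k, r i k]`, one per part `σ_i`, and split the block of a
part of length `d` into `k` rows of `d` consecutive entries. On row `n` the sequence `f_P` is
the level `n` (sign `+`) or `k - 1 - n` (sign `-`) plus the part itself scaled by `1 / (2k)`,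
a value in `(0, 1/2]`. Hence the band `(m, m + 1)` meets every block in exactly one row, namely
the row with level `m`, and that row is a copy of `σ_i` shifted by `m`. Reading these rows from
left to right gives `k` positions, increasing in the index, whose values are `m + π_a / (2k)`.
-/

open Set

section Blocks

variable {g : ℕ → ℕ} {u a : ℕ}

noncomputable def blockIndex (g : ℕ → ℕ) (a : ℕ) : ℕ := sInf {i | a ≤ g i}

theorem blockIndex_spec (h0 : g 0 < a) (hu : a ≤ g u) :
    1 ≤ blockIndex g a ∧ blockIndex g a ≤ u ∧
      g (blockIndex g a - 1) < a ∧ a ≤ g (blockIndex g a) := by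
  have hmem : a ≤ g (blockIndex g a) := Nat.sInf_mem (s := {i | a ≤ g i}) ⟨u, hu⟩
  have hpos : 1 ≤ blockIndex g a := by
    by_contra h
    rw [show blockIndex g a = 0 by omega] at hmem
    omega
  have hbelow : ¬ a ≤ g (blockIndex g a - 1) :=
    Nat.notMem_of_lt_sInf (s := {i | a ≤ g i}) (by unfold blockIndex at hpos ⊢; omega)
  exact ⟨hpos, Nat.sInf_le hu, not_le.mp hbelow, hmem⟩

theorem blockIndex_eq (hg : MonotoneOn g (Icc 0 u)) {i : ℕ} (hi : i ≤ u)
    (hlo : g (i - 1) < a) (hhi : a ≤ g i) : blockIndex g a = i := by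
  have hle : blockIndex g a ≤ i := Nat.sInf_le hhi
  have hmem : a ≤ g (blockIndex g a) := Nat.sInf_mem (s := {i | a ≤ g i}) ⟨i, hhi⟩
  by_contra hne
  have := hg ⟨Nat.zero_le _, by omega⟩ ⟨Nat.zero_le _, by omega⟩
    (show blockIndex g a ≤ i - 1 by omega)
  omega

end Blocks

theorem mul_add_le_mul {n k j d : ℕ} (hn : n < k) (hj : j ≤ d) : n * d + j ≤ k * d := by
  nlinarith

theorem exists_eq_mul_add {y k d : ℕ} (hy : 0 < y) (hyd : y ≤ k * d) :
    ∃ n < k, ∃ j, 1 ≤ j ∧ j ≤ d ∧ y = n * d + j := by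
  have hd : 0 < d := Nat.pos_of_ne_zero fun h => by simp [h] at hyd; omega
  refine ⟨(y - 1) / d, Nat.div_lt_of_lt_mul (by rw [mul_comm]; omega), (y - 1) % d + 1,
    by omega, Nat.mod_lt _ hd, ?_⟩
  have := Nat.div_add_mod (y - 1) d
  rw [mul_comm] at this
  omega

theorem eq_of_natCast_add_mem_Ioo {n m : ℕ} {t : ℝ} (ht0 : 0 ≤ t) (ht1 : t < 1)
    (h : (n : ℝ) + t ∈ Ioo (m : ℝ) (m + 1)) : n = m := by
  have h1 : n < m + 1 := by exact_mod_cast (by linarith [h.2] : (n : ℝ) < m + 1)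
  have h2 : m < n + 1 := by exact_mod_cast (by linarith [h.1] : (m : ℝ) < n + 1)
  omega

theorem div_two_mul_mem_Ioo {p k : ℕ} (hp : p ∈ Icc 1 k) :
    (p : ℝ) / (2 * k) ∈ Ioo 0 1 := by
  have hp1 : (1 : ℝ) ≤ p := by exact_mod_cast hp.1
  have hpk : (p : ℝ) ≤ k := by exact_mod_cast hp.2
  constructor
  · exact div_pos (by linarith) (by linarith)
  · rw [div_lt_one (by linarith)]
    linarith

section SignedRow

variable {k n : ℕ} {b : Bool}

/-- The integer part of `f_P` on row `n` of a block with sign `b`. Being an involution of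
`[0, k)`, it also gives the row of that block lying in the band `(n, n + 1)`. -/
def signedRow (k : ℕ) (b : Bool) (n : ℕ) : ℕ := if b then n else k - 1 - n

theorem signedRow_lt (hn : n < k) : signedRow k b n < k := by
  unfold signedRow; split <;> omega

theorem signedRow_signedRow (hn : n < k) : signedRow k b (signedRow k b n) = n := by
  unfold signedRow; split <;> omega

theorem cast_signedRow (hn : n < k) :
    (signedRow k b n : ℝ) = if b then (n : ℝ) else (k : ℝ) - 1 - (n : ℝ) := by
  unfold signedRow
  split
  · rfl
  · rw [Nat.cast_sub (by omega), Nat.cast_sub (by omega), Nat.cast_one]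

end SignedRow

/-- The defining equations of `f_P` for the parts `π[r (i-1) + 1, r i]`, `1 ≤ i ≤ u`, with signs
`s i` (`true` for `+`). -/
def IsSignedPartitionSeq (k u : ℕ) (π r : ℕ → ℕ) (s : ℕ → Bool) (f : ℕ → ℝ) : Prop :=
  ∀ i, 1 ≤ i → i ≤ u → ∀ m < k, ∀ j, 1 ≤ j → j ≤ r i - r (i - 1) →
    f (r (i - 1) * k + m * (r i - r (i - 1)) + j) =
      (if s i then (m : ℝ) else (k : ℝ) - 1 - (m : ℝ)) + (π (r (i - 1) + j) : ℝ) / (2 * k)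

theorem IsSignedPartitionSeq.apply {k u : ℕ} {π r : ℕ → ℕ} {s : ℕ → Bool} {f : ℕ → ℝ}
    (hf : IsSignedPartitionSeq k u π r s f) {i n j : ℕ} (hi1 : 1 ≤ i) (hiu : i ≤ u)
    (hn : n < k) (hj1 : 1 ≤ j) (hjd : j ≤ r i - r (i - 1)) :
    f (r (i - 1) * k + n * (r i - r (i - 1)) + j) =
      signedRow k (s i) n + (π (r (i - 1) + j) : ℝ) / (2 * k) := by
  rw [hf i hi1 hiu n hn j hj1 hjd, cast_signedRow hn]

section BandPos

variable {k u m : ℕ} {π r : ℕ → ℕ} {s : ℕ → Bool} {f : ℕ → ℝ}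

/-- The position of `π_a` in the band `(m, m + 1)`: entry `a - r (i-1)` of the row of level `m`
in the block of the part `i` containing `a`. -/
noncomputable def bandPos (k : ℕ) (r : ℕ → ℕ) (s : ℕ → Bool) (m a : ℕ) : ℕ :=
  r (blockIndex r a - 1) * k +
    signedRow k (s (blockIndex r a)) m * (r (blockIndex r a) - r (blockIndex r a - 1)) +
    (a - r (blockIndex r a - 1))

theorem blockIndex_spec_of_mem (hr0 : r 0 = 0) (hru : r u = k) {a : ℕ} (ha : a ∈ Icc 1 k) :
    1 ≤ blockIndex r a ∧ blockIndex r a ≤ u ∧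
      r (blockIndex r a - 1) < a ∧ a ≤ r (blockIndex r a) :=
  blockIndex_spec (by rw [hr0]; exact ha.1) (by rw [hru]; exact ha.2)

theorem bandPos_mem_block (hr0 : r 0 = 0) (hru : r u = k) (hm : m < k) {a : ℕ}
    (ha : a ∈ Icc 1 k) :
    r (blockIndex r a - 1) * k < bandPos k r s m a ∧
      bandPos k r s m a ≤ r (blockIndex r a) * k := by
  obtain ⟨-, -, hlo, hhi⟩ := blockIndex_spec_of_mem hr0 hru ha
  unfold bandPos
  generalize blockIndex r a = i at hlo hhi ⊢
  have hrow := mul_add_le_mul (signedRow_lt (b := s i) hm)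
    (show a - r (i - 1) ≤ r i - r (i - 1) by omega)
  have hsplit : r (i - 1) * k + k * (r i - r (i - 1)) = r i * k := by
    rw [mul_comm k, ← add_mul, Nat.add_sub_cancel' (by omega)]
  omega

theorem bandPos_strictMonoOn (hr : MonotoneOn r (Icc 0 u)) (hr0 : r 0 = 0) (hru : r u = k)
    (hm : m < k) : StrictMonoOn (bandPos k r s m) (Icc 1 k) := by
  intro a ha b hb hab
  obtain ⟨-, -, hloa, hhia⟩ := blockIndex_spec_of_mem hr0 hru ha
  obtain ⟨hb1, hbu, hlob, hhib⟩ := blockIndex_spec_of_mem hr0 hru hb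
  have hle : blockIndex r a ≤ blockIndex r b := Nat.sInf_le (hab.le.trans hhib)
  rcases hle.eq_or_lt with heq | hlt
  · unfold bandPos
    rw [heq]
    omega
  · calc bandPos k r s m a ≤ r (blockIndex r a) * k := (bandPos_mem_block hr0 hru hm ha).2
      _ ≤ r (blockIndex r b - 1) * k :=
        Nat.mul_le_mul_right k (hr ⟨Nat.zero_le _, by omega⟩ ⟨Nat.zero_le _, by omega⟩ (by omega))
      _ < bandPos k r s m b := (bandPos_mem_block hr0 hru hm hb).1

theorem IsSignedPartitionSeq.apply_bandPos (hf : IsSignedPartitionSeq k u π r s f)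
    (hr0 : r 0 = 0) (hru : r u = k) (hm : m < k) {a : ℕ} (ha : a ∈ Icc 1 k) :
    f (bandPos k r s m a) = m + (π a : ℝ) / (2 * k) := by
  obtain ⟨hi1, hiu, hlo, hhi⟩ := blockIndex_spec_of_mem hr0 hru ha
  unfold bandPos
  generalize blockIndex r a = i at hi1 hiu hlo hhi ⊢
  rw [hf.apply hi1 hiu (signedRow_lt hm) (by omega) (by omega), signedRow_signedRow hm,
    Nat.add_sub_cancel' hlo.le]

theorem IsSignedPartitionSeq.exists_bandPos_eq (hf : IsSignedPartitionSeq k u π r s f)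
    (hr : MonotoneOn r (Icc 0 u)) (hr0 : r 0 = 0) (hru : r u = k)
    (hπ : MapsTo π (Icc 1 k) (Icc 1 k)) {x : ℕ} (hx : x ∈ Icc 1 (k * k))
    (hfx : f x ∈ Ioo (m : ℝ) (m + 1)) :
    ∃ a ∈ Icc 1 k, bandPos k r s m a = x := by
  obtain ⟨hi1, hiu, hlo, hhi⟩ := blockIndex_spec (g := fun i => r i * k) (u := u)
    (by simp only [hr0, zero_mul]; exact hx.1) (by simp only [hru]; exact hx.2)
  generalize blockIndex (fun i => r i * k) x = i at hi1 hiu hlo hhi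
  have hri : r i ≤ k := hru ▸ hr ⟨Nat.zero_le _, hiu⟩ ⟨Nat.zero_le _, le_rfl⟩ hiu
  have hsplit : r (i - 1) * k + k * (r i - r (i - 1)) = r i * k := by
    have : r (i - 1) ≤ r i := hr ⟨Nat.zero_le _, by omega⟩ ⟨Nat.zero_le _, hiu⟩ (by omega)
    rw [mul_comm k, ← add_mul, Nat.add_sub_cancel' this]
  obtain ⟨n, hn, j, hj1, hjd, hxn⟩ :=
    exists_eq_mul_add (y := x - r (i - 1) * k) (k := k) (d := r i - r (i - 1))
      (by omega) (by omega)
  have hfx' := hf.apply hi1 hiu hn hj1 hjd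
  rw [show r (i - 1) * k + n * (r i - r (i - 1)) + j = x by omega] at hfx'
  have ha : r (i - 1) + j ∈ Icc 1 k := ⟨by omega, by omega⟩
  obtain ⟨hfrac0, hfrac1⟩ := div_two_mul_mem_Ioo (hπ ha)
  have hrow : signedRow k (s i) n = m :=
    eq_of_natCast_add_mem_Ioo hfrac0.le hfrac1 (hfx' ▸ hfx)
  refine ⟨r (i - 1) + j, ha, ?_⟩
  unfold bandPos
  rw [blockIndex_eq hr hiu (by omega) (by omega), ← hrow, signedRow_signedRow hn]
  omega

theorem IsSignedPartitionSeq.bandPos_image (hf : IsSignedPartitionSeq k u π r s f)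
    (hr : MonotoneOn r (Icc 0 u)) (hr0 : r 0 = 0) (hru : r u = k)
    (hπ : MapsTo π (Icc 1 k) (Icc 1 k)) (hm : m < k) :
    bandPos k r s m '' Icc 1 k =
      {x | x ∈ Icc 1 (k * k) ∧ (m : ℝ) < f x ∧ f x < (m : ℝ) + 1} := by
  ext x
  constructor
  · rintro ⟨a, ha, rfl⟩
    obtain ⟨-, hiu, -, -⟩ := blockIndex_spec_of_mem hr0 hru ha
    obtain ⟨hlo, hhi⟩ := bandPos_mem_block (s := s) hr0 hru hm ha
    obtain ⟨hfrac0, hfrac1⟩ := div_two_mul_mem_Ioo (hπ ha)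
    have hrk : r (blockIndex r a) * k ≤ k * k :=
      Nat.mul_le_mul_right k (hru ▸ hr ⟨Nat.zero_le _, hiu⟩ ⟨Nat.zero_le _, le_rfl⟩ hiu)
    rw [mem_ofPred_eq, hf.apply_bandPos hr0 hru hm ha]
    exact ⟨⟨by omega, hhi.trans hrk⟩, by linarith, by linarith⟩
  · rintro ⟨hx, hfx⟩
    exact hf.exists_bandPos_eq hr hr0 hru hπ hx hfx

end BandPos

theorem stmt_6_general (k u : ℕ) (π : ℕ → ℕ)
    (hπ : Set.BijOn π (Set.Icc 1 k) (Set.Icc 1 k))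
    (r : ℕ → ℕ) (hr0 : r 0 = 0) (hru : r u = k)
    (hrmono : StrictMonoOn r (Set.Icc 0 u))
    (s : ℕ → Bool)
    (f : ℕ → ℝ)
    -- defining equations of f_P
    (hf : ∀ i, 1 ≤ i → i ≤ u → ∀ m < k, ∀ j, 1 ≤ j → j ≤ r i - r (i - 1) →
      f (r (i - 1) * k + m * (r i - r (i - 1)) + j) =
        (if s i then (m : ℝ) else (k : ℝ) - 1 - (m : ℝ)) +
          (π (r (i - 1) + j) : ℝ) / (2 * k))
    (m : ℕ) (hm : m < k) :
    {x | x ∈ Set.Icc 1 (k * k) ∧ (m : ℝ) < f x ∧ f x < (m : ℝ) + 1}.ncard = k ∧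
    ∃ idx : ℕ → ℕ, StrictMonoOn idx (Set.Icc 1 k) ∧
      idx '' Set.Icc 1 k = {x | x ∈ Set.Icc 1 (k * k) ∧ (m : ℝ) < f x ∧ f x < (m : ℝ) + 1} ∧
      ∀ a ∈ Set.Icc 1 k, ∀ b ∈ Set.Icc 1 k, (f (idx a) < f (idx b) ↔ π a < π b) := by
  have hf : IsSignedPartitionSeq k u π r s f := hf
  have hr := hrmono.monotoneOn
  have hmono := bandPos_strictMonoOn (s := s) hr hr0 hru hm
  have himg := IsSignedPartitionSeq.bandPos_image hf hr hr0 hru hπ.mapsTo hm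
  refine ⟨?_, bandPos k r s m, hmono, himg, fun a ha b hb => ?_⟩
  · rw [← himg, hmono.injOn.ncard_image, ncard_Icc_nat, Nat.add_sub_cancel]
  · rw [hf.apply_bandPos hr0 hru hm ha, hf.apply_bandPos hr0 hru hm hb, add_lt_add_iff_left,
      div_lt_div_iff_of_pos_right (by positivity [hm.pos]), Nat.cast_lt]

/-- For a signed partition `P` of a permutation `π` of length `k` (partition boundaries
`r 0 = 0 < r 1 < ⋯ < r u = k`, signs `s`), the associated sequence `f_P : [k²] → ℝ` satisfies:
for every `0 ≤ m ≤ k-1` the set of entries with value strictly between `m` and `m+1` has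
exactly `k` elements and, in increasing index order, is order-isomorphic to `π`. -/
theorem stmt_6 (k u : ℕ) (hk : 1 ≤ k) (π : ℕ → ℕ)
    (hπ : Set.BijOn π (Set.Icc 1 k) (Set.Icc 1 k))
    (r : ℕ → ℕ) (hr0 : r 0 = 0) (hru : r u = k)
    (hrmono : StrictMonoOn r (Set.Icc 0 u))
    (s : ℕ → Bool)
    -- sign constraint: for parts of length > 1, the sign is `-` (i.e. `false`) iff the
    -- minimum of the part appears (in `π`) before its maximum
    (hsign : ∀ i, 1 ≤ i → i ≤ u → 1 < r i - r (i - 1) →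
      ∀ a ∈ Set.Icc (r (i - 1) + 1) (r i), ∀ b ∈ Set.Icc (r (i - 1) + 1) (r i),
        (∀ c ∈ Set.Icc (r (i - 1) + 1) (r i), π a ≤ π c ∧ π c ≤ π b) →
        (s i = false ↔ a < b))
    (f : ℕ → ℝ)
    -- defining equations of f_P
    (hf : ∀ i, 1 ≤ i → i ≤ u → ∀ m < k, ∀ j, 1 ≤ j → j ≤ r i - r (i - 1) →
      f (r (i - 1) * k + m * (r i - r (i - 1)) + j) =
        (if s i then (m : ℝ) else (k : ℝ) - 1 - (m : ℝ)) +
          (π (r (i - 1) + j) : ℝ) / (2 * k))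
    (m : ℕ) (hm : m < k) :
    {x | x ∈ Set.Icc 1 (k * k) ∧ (m : ℝ) < f x ∧ f x < (m : ℝ) + 1}.ncard = k ∧
    ∃ idx : ℕ → ℕ, StrictMonoOn idx (Set.Icc 1 k) ∧
      idx '' Set.Icc 1 k = {x | x ∈ Set.Icc 1 (k * k) ∧ (m : ℝ) < f x ∧ f x < (m : ℝ) + 1} ∧
      ∀ a ∈ Set.Icc 1 k, ∀ b ∈ Set.Icc 1 k, (f (idx a) < f (idx b) ↔ π a < π b) :=
  stmt_6_general k u π hπ r hr0 hru hrmono s f hf m hm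
end

section
/- Let π be a permutation of length k ≥ 3 with π(ℓ) = 1 and π(ℓ+1) = k for some ℓ. Define the signed partition P = (Λ, S) where Λ has the singleton parts (π_1),…,(π_{ℓ−1}), the pair part (π_ℓ, π_{ℓ+1}) = (1, k), and the singleton parts (π_{ℓ+2}),…,(π_k); the sign of the pair part is −, and for singleton parts the sign of part i < ℓ is + iff π_i > π_{i+1}, and of part i > ℓ (in partition indexing) is + iff the corresponding π-value is less than its left π-neighbor. Then the sequence f_P : [k²] → ℝ contains no π-copy other than the k trivial copies (those whose entries all have values strictly between m and m+1 for a common integer m). -/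
/-- Block (part) index of position `x` in the sequence `f_P`. -/
def blkF (k ℓ x : ℕ) : ℕ :=
  if x ≤ (ℓ - 1) * k then (x - 1) / k + 1
  else if x ≤ (ℓ + 1) * k then ℓ
  else (x - 1) / k

/-- Label (fractional-part code) of position `x`. -/
def labF (k ℓ : ℕ) (p : ℕ → ℕ) (x : ℕ) : ℕ :=
  if blkF k ℓ x < ℓ then p (blkF k ℓ x)
  else if blkF k ℓ x = ℓ then (if (x - (ℓ - 1) * k - 1) % 2 = 0 then 1 else k)
  else p (blkF k ℓ x + 1)

/-- Level (integer part) of position `x`. -/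
def levF (k ℓ : ℕ) (p : ℕ → ℕ) (x : ℕ) : ℕ :=
  if blkF k ℓ x = ℓ then k - 1 - (x - (ℓ - 1) * k - 1) / 2
  else if p (blkF k ℓ x + 1) < p (blkF k ℓ x) then (x - 1) % k
  else k - 1 - (x - 1) % k

lemma repF (k ℓ : ℕ) (p : ℕ → ℕ) (hk : 3 ≤ k) (hℓ1 : 1 ≤ ℓ) (hℓ2 : ℓ + 1 ≤ k)
    (x : ℕ) (hx1 : 1 ≤ x) (hx2 : x ≤ k * k) :
    (∃ i m, 1 ≤ i ∧ i < ℓ ∧ m < k ∧ x = (i - 1) * k + m + 1 ∧ blkF k ℓ x = i ∧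
      labF k ℓ p x = p i ∧
      ((p (i+1) < p i ∧ levF k ℓ p x = m) ∨ (¬ p (i+1) < p i ∧ levF k ℓ p x = k - 1 - m))) ∨
    (∃ m, m < k ∧ blkF k ℓ x = ℓ ∧ levF k ℓ p x = k - 1 - m ∧
      ((x = (ℓ - 1) * k + 2 * m + 1 ∧ labF k ℓ p x = 1) ∨
       (x = (ℓ - 1) * k + 2 * m + 2 ∧ labF k ℓ p x = k))) ∨
    (∃ i m, ℓ < i ∧ i + 1 ≤ k ∧ m < k ∧ x = i * k + m + 1 ∧ blkF k ℓ x = i ∧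
      labF k ℓ p x = p (i+1) ∧
      ((p (i+1) < p i ∧ levF k ℓ p x = m) ∨ (¬ p (i+1) < p i ∧ levF k ℓ p x = k - 1 - m))) := by
  have hk0 : 0 < k := by omega
  by_cases hc1 : x ≤ (ℓ - 1) * k
  · left
    obtain ⟨q, hq⟩ : ∃ q, (x - 1) / k = q := ⟨_, rfl⟩
    obtain ⟨r, hr⟩ : ∃ r, (x - 1) % k = r := ⟨_, rfl⟩
    have hb : blkF k ℓ x = q + 1 := by simp [blkF, hc1, hq]
    have hdm : q * k + r = x - 1 := by rw [← hq, ← hr]; exact Nat.div_add_mod' (x - 1) k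
    have hmlt : r < k := by rw [← hr]; exact Nat.mod_lt _ hk0
    have hdl : q < ℓ - 1 := by rw [← hq, Nat.div_lt_iff_lt_mul hk0]; omega
    refine ⟨q + 1, r, by omega, by omega, hmlt,
      by simp only [Nat.add_sub_cancel]; omega, hb, ?_, ?_⟩
    · unfold labF; rw [hb, if_pos (by omega)]
    · by_cases hpc : p (q + 1 + 1) < p (q + 1)
      · exact Or.inl ⟨hpc, by unfold levF; rw [hb, if_neg (by omega), if_pos hpc, hr]⟩
      · exact Or.inr ⟨hpc, by unfold levF; rw [hb, if_neg (by omega), if_neg hpc, hr]⟩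
  · by_cases hc2 : x ≤ (ℓ + 1) * k
    · right; left
      have hb : blkF k ℓ x = ℓ := by simp [blkF, hc1, hc2]
      have he1 : (ℓ + 1) * k = (ℓ - 1) * k + 2 * k := by
        have h2 : ℓ + 1 = (ℓ - 1) + 2 := by omega
        rw [h2, add_mul]
      obtain ⟨s, hs⟩ : ∃ s, x - (ℓ - 1) * k - 1 = s := ⟨_, rfl⟩
      obtain ⟨q2, hq2⟩ : ∃ q, s / 2 = q := ⟨_, rfl⟩
      obtain ⟨r2, hr2⟩ : ∃ r, s % 2 = r := ⟨_, rfl⟩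
      have hdm2 : 2 * q2 + r2 = s := by rw [← hq2, ← hr2]; exact Nat.div_add_mod s 2
      have hsm : r2 < 2 := by rw [← hr2]; exact Nat.mod_lt _ (by omega)
      have hmk : q2 < k := by omega
      refine ⟨q2, hmk, hb, ?_, ?_⟩
      · unfold levF; rw [hb, if_pos rfl, hs, hq2]
      · by_cases hpar : r2 = 0
        · refine Or.inl ⟨by omega, ?_⟩
          unfold labF
          rw [hb, if_neg (lt_irrefl ℓ), if_pos rfl, hs, if_pos (by omega : s % 2 = 0)]
        · refine Or.inr ⟨by omega, ?_⟩
          unfold labF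
          rw [hb, if_neg (lt_irrefl ℓ), if_pos rfl, hs, if_neg (by omega : ¬ s % 2 = 0)]
    · right; right
      obtain ⟨q, hq⟩ : ∃ q, (x - 1) / k = q := ⟨_, rfl⟩
      obtain ⟨r, hr⟩ : ∃ r, (x - 1) % k = r := ⟨_, rfl⟩
      have hb : blkF k ℓ x = q := by simp [blkF, hc1, hc2, hq]
      have hdm : q * k + r = x - 1 := by rw [← hq, ← hr]; exact Nat.div_add_mod' (x - 1) k
      have hmlt : r < k := by rw [← hr]; exact Nat.mod_lt _ hk0
      have hge : ℓ + 1 ≤ q := by rw [← hq, Nat.le_div_iff_mul_le hk0]; omega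
      have hlt : q < k := by rw [← hq, Nat.div_lt_iff_lt_mul hk0]; omega
      refine ⟨q, r, by omega, by omega, hmlt, by omega, hb, ?_, ?_⟩
      · unfold labF; rw [hb, if_neg (by omega), if_neg (by omega)]
      · by_cases hpc : p (q + 1) < p q
        · exact Or.inl ⟨hpc, by unfold levF; rw [hb, if_neg (by omega), if_pos hpc, hr]⟩
        · exact Or.inr ⟨hpc, by unfold levF; rw [hb, if_neg (by omega), if_neg hpc, hr]⟩
lemma blkF_mono (k ℓ x y : ℕ) (hk : 0 < k) (hℓ1 : 1 ≤ ℓ) (hx : 1 ≤ x) (hxy : x ≤ y) :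
    blkF k ℓ x ≤ blkF k ℓ y := by
  obtain ⟨qx, hqx⟩ : ∃ q, (x - 1) / k = q := ⟨_, rfl⟩
  obtain ⟨qy, hqy⟩ : ∃ q, (y - 1) / k = q := ⟨_, rfl⟩
  have hmono : qx ≤ qy := by rw [← hqx, ← hqy]; exact Nat.div_le_div_right (by omega)
  unfold blkF
  rw [hqx, hqy]
  have hle : (ℓ - 1) * k ≤ (ℓ + 1) * k := Nat.mul_le_mul_right _ (by omega)
  by_cases c1 : x ≤ (ℓ - 1) * k
  · have hxl : qx < ℓ - 1 := by rw [← hqx, Nat.div_lt_iff_lt_mul hk]; omega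
    rw [if_pos c1]
    by_cases d1 : y ≤ (ℓ - 1) * k
    · rw [if_pos d1]; omega
    · rw [if_neg d1]
      by_cases d2 : y ≤ (ℓ + 1) * k
      · rw [if_pos d2]; omega
      · rw [if_neg d2]
        have : ℓ + 1 ≤ qy := by rw [← hqy, Nat.le_div_iff_mul_le hk]; omega
        omega
  · rw [if_neg c1]
    by_cases c2 : x ≤ (ℓ + 1) * k
    · rw [if_pos c2]
      by_cases d1 : y ≤ (ℓ - 1) * k
      · omega
      · rw [if_neg d1]
        by_cases d2 : y ≤ (ℓ + 1) * k
        · rw [if_pos d2]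
        · rw [if_neg d2]
          have : ℓ + 1 ≤ qy := by rw [← hqy, Nat.le_div_iff_mul_le hk]; omega
          omega
    · rw [if_neg c2]
      have hxg : ℓ + 1 ≤ qx := by rw [← hqx, Nat.le_div_iff_mul_le hk]; omega
      by_cases d1 : y ≤ (ℓ - 1) * k
      · omega
      · rw [if_neg d1]
        by_cases d2 : y ≤ (ℓ + 1) * k
        · omega
        · rw [if_neg d2]; omega

lemma Ulem (k v v' t t' : ℕ) (hk : 1 ≤ k) (hv : v < k) (hv' : v' < k)
    (ht1 : 1 ≤ t) (ht2 : t ≤ k) (ht1' : 1 ≤ t') (ht2' : t' ≤ k) :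
    ((v : ℝ) + t / (2 * k) < (v' : ℝ) + t' / (2 * k)) ↔ (v < v' ∨ (v = v' ∧ t < t')) := by
  have hkR : (1 : ℝ) ≤ k := by exact_mod_cast hk
  have h2k : (0 : ℝ) < 2 * k := by linarith
  have key : ∀ s : ℕ, 1 ≤ s → s ≤ k → (0 : ℝ) < (s : ℝ) / (2 * k) ∧ (s : ℝ) / (2 * k) ≤ 1 / 2 := by
    intro s h1 h2
    have hs1 : (1 : ℝ) ≤ (s : ℝ) := by exact_mod_cast h1
    have hs2 : (s : ℝ) ≤ (k : ℝ) := by exact_mod_cast h2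
    constructor
    · apply div_pos (by linarith) h2k
    · rw [div_le_iff₀ h2k]; linarith
  obtain ⟨hp, hh⟩ := key t ht1 ht2
  obtain ⟨hp', hh'⟩ := key t' ht1' ht2'
  constructor
  · intro h
    rcases lt_trichotomy v v' with hc | hc | hc
    · exact Or.inl hc
    · right
      refine ⟨hc, ?_⟩
      have hd : (t : ℝ) / (2 * k) < (t' : ℝ) / (2 * k) := by
        have : (v : ℝ) = (v' : ℝ) := by exact_mod_cast hc
        linarith
      rw [div_lt_div_iff₀ h2k h2k] at hd
      have : (t : ℝ) < (t' : ℝ) := lt_of_mul_lt_mul_right hd (le_of_lt h2k)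
      exact_mod_cast this
    · exfalso
      have : (v' : ℝ) + 1 ≤ (v : ℝ) := by exact_mod_cast Nat.succ_le_of_lt hc
      linarith
  · intro h
    rcases h with hc | ⟨hc, hc'⟩
    · have : (v : ℝ) + 1 ≤ (v' : ℝ) := by exact_mod_cast Nat.succ_le_of_lt hc
      linarith
    · have hveq : (v : ℝ) = (v' : ℝ) := by exact_mod_cast hc
      have htR : (t : ℝ) < (t' : ℝ) := by exact_mod_cast hc'
      have : (t : ℝ) / (2 * k) < (t' : ℝ) / (2 * k) := by gcongr
      linarith
lemma sameBlk_ne (k ℓ : ℕ) (p : ℕ → ℕ) (hk : 3 ≤ k) (hℓ1 : 1 ≤ ℓ) (hℓ2 : ℓ + 1 ≤ k)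
    (x y : ℕ) (hx1 : 1 ≤ x) (hx2 : x ≤ k * k) (hy1 : 1 ≤ y) (hy2 : y ≤ k * k)
    (hxy : x < y) (hbe : blkF k ℓ x = blkF k ℓ y) (hne : blkF k ℓ x ≠ ℓ) :
    labF k ℓ p x = labF k ℓ p y ∧
    (p (blkF k ℓ x + 1) < p (blkF k ℓ x) → levF k ℓ p x < levF k ℓ p y) ∧
    (¬ p (blkF k ℓ x + 1) < p (blkF k ℓ x) → levF k ℓ p y < levF k ℓ p x) := by
  rcases repF k ℓ p hk hℓ1 hℓ2 x hx1 hx2 with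
      ⟨i, m, hi1, hiℓ, hm, hxe, hbx, hlx, hvx⟩ |
      ⟨m, hm, hbx, hvx, hor⟩ |
      ⟨i, m, hiℓ, hik, hm, hxe, hbx, hlx, hvx⟩
  · rcases repF k ℓ p hk hℓ1 hℓ2 y hy1 hy2 with
        ⟨i', m', hi1', hiℓ', hm', hye, hby, hly, hvy⟩ |
        ⟨m', hm', hby, hvy, hor'⟩ |
        ⟨i', m', hiℓ', hik', hm', hye, hby, hly, hvy⟩
    · have hii : i = i' := by rw [← hbx, ← hby, hbe]
      subst hii
      have hmm : m < m' := by omega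
      rw [hbx]
      refine ⟨by rw [hlx, hly], ?_, ?_⟩
      · intro hc
        rcases hvx with ⟨_, hvx2⟩ | ⟨hc2, _⟩
        · rcases hvy with ⟨_, hvy2⟩ | ⟨hc2, _⟩
          · omega
          · exact absurd hc hc2
        · exact absurd hc hc2
      · intro hc
        rcases hvx with ⟨hc2, _⟩ | ⟨_, hvx2⟩
        · exact absurd hc2 hc
        · rcases hvy with ⟨hc2, _⟩ | ⟨_, hvy2⟩
          · exact absurd hc2 hc
          · omega
    · exfalso; rw [hbx, hby] at hbe; omega
    · exfalso; rw [hbx, hby] at hbe; omega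
  · exact absurd hbx hne
  · rcases repF k ℓ p hk hℓ1 hℓ2 y hy1 hy2 with
        ⟨i', m', hi1', hiℓ', hm', hye, hby, hly, hvy⟩ |
        ⟨m', hm', hby, hvy, hor'⟩ |
        ⟨i', m', hiℓ', hik', hm', hye, hby, hly, hvy⟩
    · exfalso; rw [hbx, hby] at hbe; omega
    · exfalso; rw [hbx, hby] at hbe; omega
    · have hii : i = i' := by rw [← hbx, ← hby, hbe]
      subst hii
      have hmm : m < m' := by omega
      rw [hbx]
      refine ⟨by rw [hlx, hly], ?_, ?_⟩
      · intro hc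
        rcases hvx with ⟨_, hvx2⟩ | ⟨hc2, _⟩
        · rcases hvy with ⟨_, hvy2⟩ | ⟨hc2, _⟩
          · omega
          · exact absurd hc hc2
        · exact absurd hc hc2
      · intro hc
        rcases hvx with ⟨hc2, _⟩ | ⟨_, hvx2⟩
        · exact absurd hc2 hc
        · rcases hvy with ⟨hc2, _⟩ | ⟨_, hvy2⟩
          · exact absurd hc2 hc
          · omega

lemma sameBlk_pair (k ℓ : ℕ) (p : ℕ → ℕ) (hk : 3 ≤ k) (hℓ1 : 1 ≤ ℓ) (hℓ2 : ℓ + 1 ≤ k)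
    (x y : ℕ) (hx1 : 1 ≤ x) (hx2 : x ≤ k * k) (hy1 : 1 ≤ y) (hy2 : y ≤ k * k)
    (hxy : x < y) (hbx : blkF k ℓ x = ℓ) (hby : blkF k ℓ y = ℓ) :
    levF k ℓ p y < levF k ℓ p x ∨
      (levF k ℓ p y = levF k ℓ p x ∧ labF k ℓ p x = 1 ∧ labF k ℓ p y = k) := by
  rcases repF k ℓ p hk hℓ1 hℓ2 x hx1 hx2 with
      ⟨i, m, hi1, hiℓ, hm, hxe, hbx', hlx, hvx⟩ |
      ⟨m, hm, hbx', hvx, hor⟩ |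
      ⟨i, m, hiℓ, hik, hm, hxe, hbx', hlx, hvx⟩
  · exfalso; rw [hbx'] at hbx; omega
  · rcases repF k ℓ p hk hℓ1 hℓ2 y hy1 hy2 with
        ⟨i', m', hi1', hiℓ', hm', hye, hby', hly, hvy⟩ |
        ⟨m', hm', hby', hvy, hor'⟩ |
        ⟨i', m', hiℓ', hik', hm', hye, hby', hly, hvy⟩
    · exfalso; rw [hby'] at hby; omega
    · rcases hor with ⟨hxe, hlabx⟩ | ⟨hxe, hlabx⟩ <;>
        rcases hor' with ⟨hye, hlaby⟩ | ⟨hye, hlaby⟩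
      · left; omega
      · by_cases hmm : m = m'
        · right
          refine ⟨by omega, hlabx, hlaby⟩
        · left; omega
      · left; omega
      · left; omega
    · exfalso; rw [hby'] at hby; omega
  · exfalso; rw [hbx'] at hbx; omega

/-- Let `π` be a permutation of length `k ≥ 3` with `π ℓ = 1` and `π (ℓ+1) = k`.  Consider the
signed partition whose only non-singleton part is the pair `(1,k)` at positions `ℓ, ℓ+1`
(sign `-`), singleton part `i < ℓ` having sign `+` iff `π (i+1) < π i`, and singleton part
`i > ℓ` (partition indexing; it carries the value `π (i+1)`) sign `+` iff `π (i+1) < π i`.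
Then the associated sequence `f_P : [k²] → ℝ` contains only trivial `π`-copies, i.e. copies
whose values all lie in a common open unit interval `(m, m+1)`. -/
theorem stmt_7 (k ℓ : ℕ) (hk : 3 ≤ k) (hℓ1 : 1 ≤ ℓ) (hℓ2 : ℓ + 1 ≤ k)
    (π : ℕ → ℕ) (hπ : Set.BijOn π (Set.Icc 1 k) (Set.Icc 1 k))
    (hmin : π ℓ = 1) (hmax : π (ℓ + 1) = k)
    (f : ℕ → ℝ)
    -- singleton parts before the pair
    (hf1 : ∀ i, 1 ≤ i → i < ℓ → ∀ m < k,
      f ((i - 1) * k + m + 1) =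
        (if π (i + 1) < π i then (m : ℝ) else (k : ℝ) - 1 - (m : ℝ)) + (π i : ℝ) / (2 * k))
    -- the pair part (sign `-`)
    (hf2 : ∀ m < k,
      f ((ℓ - 1) * k + 2 * m + 1) = (k : ℝ) - 1 - (m : ℝ) + (π ℓ : ℝ) / (2 * k) ∧
      f ((ℓ - 1) * k + 2 * m + 2) = (k : ℝ) - 1 - (m : ℝ) + (π (ℓ + 1) : ℝ) / (2 * k))
    -- singleton parts after the pair (part `i` carries the value `π (i+1)`)
    (hf3 : ∀ i, ℓ < i → i + 1 ≤ k → ∀ m < k,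
      f (i * k + m + 1) =
        (if π (i + 1) < π i then (m : ℝ) else (k : ℝ) - 1 - (m : ℝ)) +
          (π (i + 1) : ℝ) / (2 * k)) :
    ∀ idx : ℕ → ℕ, StrictMonoOn idx (Set.Icc 1 k) →
      (∀ a ∈ Set.Icc 1 k, idx a ∈ Set.Icc 1 (k * k)) →
      (∀ a ∈ Set.Icc 1 k, ∀ b ∈ Set.Icc 1 k, (f (idx a) < f (idx b) ↔ π a < π b)) →
      ∃ m < k, ∀ a ∈ Set.Icc 1 k, (m : ℝ) < f (idx a) ∧ f (idx a) < (m : ℝ) + 1 := by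
  intro idx hmono hrange hiso
  -- master decomposition of f-values
  have masterX : ∀ x, 1 ≤ x → x ≤ k * k →
      f x = (levF k ℓ π x : ℝ) + (labF k ℓ π x : ℝ) / (2 * (k : ℝ)) ∧
      levF k ℓ π x < k ∧ 1 ≤ labF k ℓ π x ∧ labF k ℓ π x ≤ k ∧
      1 ≤ blkF k ℓ x ∧ blkF k ℓ x ≤ k - 1 := by
    intro x hx1 hx2
    rcases repF k ℓ π hk hℓ1 hℓ2 x hx1 hx2 with
        ⟨i, m, hi1, hiℓ, hm, hxe, hb, hl, hv⟩ |
        ⟨m, hm, hb, hv, hor⟩ |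
        ⟨i, m, hiℓ, hik, hm, hxe, hb, hl, hv⟩
    · have hfx := hf1 i hi1 hiℓ m hm
      rw [← hxe] at hfx
      have hπi : π i ∈ Set.Icc 1 k := hπ.mapsTo (Set.mem_Icc.mpr ⟨hi1, by omega⟩)
      rw [Set.mem_Icc] at hπi
      refine ⟨?_, by rcases hv with ⟨_, h⟩ | ⟨_, h⟩ <;> omega,
        by rw [hl]; exact hπi.1, by rw [hl]; exact hπi.2,
        by rw [hb]; omega, by rw [hb]; omega⟩
      rw [hfx, hl]
      rcases hv with ⟨hc, hle⟩ | ⟨hc, hle⟩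
      · rw [if_pos hc, hle]
      · rw [if_neg hc, hle]
        have h1 : ((k - 1 - m : ℕ) : ℝ) = (k : ℝ) - 1 - (m : ℝ) := by
          rw [Nat.cast_sub (by omega : m ≤ k - 1), Nat.cast_sub (by omega : 1 ≤ k),
            Nat.cast_one]
        rw [h1]
    · have hfp := hf2 m hm
      have h1 : ((k - 1 - m : ℕ) : ℝ) = (k : ℝ) - 1 - (m : ℝ) := by
        rw [Nat.cast_sub (by omega : m ≤ k - 1), Nat.cast_sub (by omega : 1 ≤ k),
          Nat.cast_one]
      rcases hor with ⟨hxe, hl⟩ | ⟨hxe, hl⟩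
      · have hfx := hfp.1
        rw [← hxe] at hfx
        refine ⟨?_, by omega, by omega, by rw [hl]; omega, by rw [hb]; omega, by rw [hb]; omega⟩
        rw [hfx, hl, hv, hmin, h1, Nat.cast_one]
      · have hfx := hfp.2
        rw [← hxe] at hfx
        refine ⟨?_, by omega, by rw [hl]; omega, by rw [hl], by rw [hb]; omega, by rw [hb]; omega⟩
        rw [hfx, hl, hv, hmax, h1]
    · have hfx := hf3 i hiℓ hik m hm
      rw [← hxe] at hfx
      have hπi : π (i + 1) ∈ Set.Icc 1 k := hπ.mapsTo (Set.mem_Icc.mpr ⟨by omega, hik⟩)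
      rw [Set.mem_Icc] at hπi
      refine ⟨?_, by rcases hv with ⟨_, h⟩ | ⟨_, h⟩ <;> omega,
        by rw [hl]; exact hπi.1, by rw [hl]; exact hπi.2,
        by rw [hb]; omega, by rw [hb]; omega⟩
      rw [hfx, hl]
      rcases hv with ⟨hc, hle⟩ | ⟨hc, hle⟩
      · rw [if_pos hc, hle]
      · rw [if_neg hc, hle]
        have h1 : ((k - 1 - m : ℕ) : ℝ) = (k : ℝ) - 1 - (m : ℝ) := by
          rw [Nat.cast_sub (by omega : m ≤ k - 1), Nat.cast_sub (by omega : 1 ≤ k),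
            Nat.cast_one]
        rw [h1]
  -- order structure
  have hO : ∀ a ∈ Set.Icc 1 k, ∀ b ∈ Set.Icc 1 k,
      (π a < π b ↔ (levF k ℓ π (idx a) < levF k ℓ π (idx b) ∨
        (levF k ℓ π (idx a) = levF k ℓ π (idx b) ∧
          labF k ℓ π (idx a) < labF k ℓ π (idx b)))) := by
    intro a ha b hb
    have hia := hrange a ha; rw [Set.mem_Icc] at hia
    have hib := hrange b hb; rw [Set.mem_Icc] at hib
    obtain ⟨e1, l1, t1a, t1b, -, -⟩ := masterX (idx a) hia.1 hia.2
    obtain ⟨e2, l2, t2a, t2b, -, -⟩ := masterX (idx b) hib.1 hib.2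
    rw [← hiso a ha b hb, e1, e2]
    exact Ulem k _ _ _ _ (by omega) l1 l2 t1a t1b t2a t2b
  -- two consecutive indices cannot share the "wrong" singleton block
  have CORE : ∀ j, 1 ≤ j → j + 1 ≤ k → j ≠ ℓ →
      blkF k ℓ (idx j) = j → blkF k ℓ (idx (j + 1)) = j → False := by
    intro j h1 h2 hne hBx hBy
    have hjI : j ∈ Set.Icc 1 k := Set.mem_Icc.mpr ⟨h1, by omega⟩
    have hj1I : (j + 1) ∈ Set.Icc 1 k := Set.mem_Icc.mpr ⟨by omega, h2⟩
    have hxy : idx j < idx (j + 1) := hmono hjI hj1I (by omega)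
    have hia := hrange j hjI; rw [Set.mem_Icc] at hia
    have hib := hrange (j + 1) hj1I; rw [Set.mem_Icc] at hib
    have hbe : blkF k ℓ (idx j) = blkF k ℓ (idx (j + 1)) := by rw [hBx, hBy]
    have hS := sameBlk_ne k ℓ π hk hℓ1 hℓ2 (idx j) (idx (j + 1)) hia.1 hia.2 hib.1 hib.2
      hxy hbe (by rw [hBx]; exact hne)
    rw [hBx] at hS
    obtain ⟨hlab, hd1, hd2⟩ := hS
    have hπne : π j ≠ π (j + 1) := by
      intro h
      have := hπ.injOn hjI hj1I h
      omega
    by_cases hgt : π (j + 1) < π j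
    · have h5 := hd1 hgt
      have h6 := (hO (j + 1) hj1I j hjI).mp hgt
      omega
    · have h5 := hd2 hgt
      have h6 := (hO j hjI (j + 1) hj1I).mp (by omega)
      omega
  -- the maximum of the copy sits in the pair block (right sweep)
  have hR : ∀ d j, ℓ + 1 ≤ j → j ≤ k → k ≤ j + d → ¬ (j ≤ blkF k ℓ (idx j)) := by
    intro d
    induction d with
    | zero =>
      intro j h1 h2 h3 hB
      have hjI : j ∈ Set.Icc 1 k := Set.mem_Icc.mpr ⟨by omega, h2⟩
      have hia := hrange j hjI; rw [Set.mem_Icc] at hia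
      obtain ⟨-, -, -, -, -, hbk⟩ := masterX (idx j) hia.1 hia.2
      omega
    | succ d ih =>
      intro j h1 h2 h3 hB
      by_cases hjk : j = k
      · have hjI : j ∈ Set.Icc 1 k := Set.mem_Icc.mpr ⟨by omega, by omega⟩
        have hia := hrange j hjI; rw [Set.mem_Icc] at hia
        obtain ⟨-, -, -, -, -, hbk⟩ := masterX (idx j) hia.1 hia.2
        omega
      · have hj1 : j + 1 ≤ k := by omega
        by_cases hB2 : j + 1 ≤ blkF k ℓ (idx (j + 1))
        · exact ih (j + 1) (by omega) hj1 (by omega) hB2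
        · have hjI : j ∈ Set.Icc 1 k := Set.mem_Icc.mpr ⟨by omega, by omega⟩
          have hj1I : (j + 1) ∈ Set.Icc 1 k := Set.mem_Icc.mpr ⟨by omega, hj1⟩
          have hia := hrange j hjI; rw [Set.mem_Icc] at hia
          have hmo : blkF k ℓ (idx j) ≤ blkF k ℓ (idx (j + 1)) :=
            blkF_mono k ℓ _ _ (by omega) hℓ1 hia.1 (le_of_lt (hmono hjI hj1I (by omega)))
          exact CORE j (by omega) hj1 (by omega) (by omega) (by omega)
  -- the minimum of the copy sits in the pair block (left sweep)
  have hL : ∀ j, 1 ≤ j → j ≤ ℓ → ¬ (blkF k ℓ (idx j) < j) := by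
    intro j
    induction j with
    | zero => intro h1 h2 h3; omega
    | succ j ih =>
      intro h1 h2 hB
      have hj1I' : (j + 1) ∈ Set.Icc 1 k := Set.mem_Icc.mpr ⟨by omega, by omega⟩
      have hib' := hrange (j + 1) hj1I'; rw [Set.mem_Icc] at hib'
      obtain ⟨-, -, -, -, hbk1, -⟩ := masterX (idx (j + 1)) hib'.1 hib'.2
      by_cases hj0 : j = 0
      · omega
      · by_cases hB2 : blkF k ℓ (idx j) < j
        · exact ih (by omega) (by omega) hB2
        · have hjI : j ∈ Set.Icc 1 k := Set.mem_Icc.mpr ⟨by omega, by omega⟩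
          have hj1I : (j + 1) ∈ Set.Icc 1 k := Set.mem_Icc.mpr ⟨by omega, by omega⟩
          have hia := hrange j hjI; rw [Set.mem_Icc] at hia
          have hmo : blkF k ℓ (idx j) ≤ blkF k ℓ (idx (j + 1)) :=
            blkF_mono k ℓ _ _ (by omega) hℓ1 hia.1 (le_of_lt (hmono hjI hj1I (by omega)))
          exact CORE j (by omega) (by omega) (by omega) (by omega) (by omega)
  -- hence both extreme entries are in the pair block
  have hℓI : ℓ ∈ Set.Icc 1 k := Set.mem_Icc.mpr ⟨hℓ1, by omega⟩
  have hℓ1I : (ℓ + 1) ∈ Set.Icc 1 k := Set.mem_Icc.mpr ⟨by omega, hℓ2⟩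
  have hia := hrange ℓ hℓI; rw [Set.mem_Icc] at hia
  have hib := hrange (ℓ + 1) hℓ1I; rw [Set.mem_Icc] at hib
  have hBl : blkF k ℓ (idx ℓ) = ℓ ∧ blkF k ℓ (idx (ℓ + 1)) = ℓ := by
    have h1 := hL ℓ hℓ1 le_rfl
    have h2 := hR (k - (ℓ + 1)) (ℓ + 1) le_rfl hℓ2 (by omega)
    have hmo : blkF k ℓ (idx ℓ) ≤ blkF k ℓ (idx (ℓ + 1)) :=
      blkF_mono k ℓ _ _ (by omega) hℓ1 hia.1 (le_of_lt (hmono hℓI hℓ1I (by omega)))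
    omega
  have hpair := sameBlk_pair k ℓ π hk hℓ1 hℓ2 (idx ℓ) (idx (ℓ + 1)) hia.1 hia.2 hib.1 hib.2
    (hmono hℓI hℓ1I (by omega)) hBl.1 hBl.2
  have hlt : π ℓ < π (ℓ + 1) := by rw [hmin, hmax]; omega
  have hlex := (hO ℓ hℓI (ℓ + 1) hℓ1I).mp hlt
  have hVeq : levF k ℓ π (idx ℓ) = levF k ℓ π (idx (ℓ + 1)) := by
    rcases hpair with h | ⟨h, -, -⟩ <;> omega
  -- all levels coincide
  have hall : ∀ a ∈ Set.Icc 1 k, levF k ℓ π (idx a) = levF k ℓ π (idx ℓ) := by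
    intro a ha
    by_cases haℓ : a = ℓ
    · rw [haℓ]
    · by_cases haℓ1 : a = ℓ + 1
      · rw [haℓ1, ← hVeq]
      · have hpa := hπ.mapsTo ha; rw [Set.mem_Icc] at hpa
        have hne1 : π a ≠ 1 := by
          intro h
          exact haℓ (hπ.injOn ha hℓI (by rw [h, hmin]))
        have hnek : π a ≠ k := by
          intro h
          exact haℓ1 (hπ.injOn ha hℓ1I (by rw [h, hmax]))
        have e1 := (hO ℓ hℓI a ha).mp (by rw [hmin]; omega)
        have e2 := (hO a ha (ℓ + 1) hℓ1I).mp (by rw [hmax]; omega)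
        omega
  -- conclusion
  refine ⟨levF k ℓ π (idx ℓ), ?_, ?_⟩
  · obtain ⟨-, hlv, -, -, -, -⟩ := masterX (idx ℓ) hia.1 hia.2
    exact hlv
  · intro a ha
    have hiaa := hrange a ha; rw [Set.mem_Icc] at hiaa
    obtain ⟨hfx, hlv, ht1, ht2, -, -⟩ := masterX (idx a) hiaa.1 hiaa.2
    rw [hfx, hall a ha]
    have hkR : (1 : ℝ) ≤ (k : ℝ) := by exact_mod_cast (by omega : 1 ≤ k)
    have h2k : (0 : ℝ) < 2 * (k : ℝ) := by linarith
    have hta : (1 : ℝ) ≤ (labF k ℓ π (idx a) : ℝ) := by exact_mod_cast ht1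
    have htb : (labF k ℓ π (idx a) : ℝ) ≤ (k : ℝ) := by exact_mod_cast ht2
    constructor
    · have : (0 : ℝ) < (labF k ℓ π (idx a) : ℝ) / (2 * (k : ℝ)) := div_pos (by linarith) h2k
      linarith
    · have : (labF k ℓ π (idx a) : ℝ) / (2 * (k : ℝ)) < 1 := by
        rw [div_lt_one h2k]; linarith
      linarith
end

section
/- Let π be a permutation of length k with π(ℓ) = 1 and π(ℓ+1) = k, let P be the corresponding signed partition of size k−1 (pairing only positions ℓ and ℓ+1), and let f_P : [k²] → ℝ be the associated sequence with intervals I_1,…,I_{k−1} where I_i consists of the indices in the i-th blown-up part. Then for any π-copy q = (q_1,…,q_k) in f_P, writing ind(i) for the index of the interval containing q_i, one has ind(i) ≥ i for all i ≤ ℓ and ind(i) ≤ i − 1 for all i ≥ ℓ+1. -/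
/-- Setup as in the tightness proof: `π` of length `k` with `π ℓ = 1`, `π (ℓ+1) = k`, the
signed partition of size `k-1` pairing only positions `ℓ, ℓ+1`, its sequence `f_P : [k²] → ℝ`,
and intervals `I 1, …, I (k-1)` of blown-up parts.  For every `π`-copy `q` in `f_P`, writing
`ind i` for the index of the interval containing `q i`, one has `ind i ≥ i` for `i ≤ ℓ` and
`ind i ≤ i - 1` for `i ≥ ℓ + 1`. -/
theorem stmt_8 (k ℓ : ℕ) (hk : 3 ≤ k) (hℓ1 : 1 ≤ ℓ) (hℓ2 : ℓ + 1 ≤ k)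
    (π : ℕ → ℕ) (hπ : Set.BijOn π (Set.Icc 1 k) (Set.Icc 1 k))
    (hmin : π ℓ = 1) (hmax : π (ℓ + 1) = k)
    (f : ℕ → ℝ)
    (hf1 : ∀ i, 1 ≤ i → i < ℓ → ∀ m < k,
      f ((i - 1) * k + m + 1) =
        (if π (i + 1) < π i then (m : ℝ) else (k : ℝ) - 1 - (m : ℝ)) + (π i : ℝ) / (2 * k))
    (hf2 : ∀ m < k,
      f ((ℓ - 1) * k + 2 * m + 1) = (k : ℝ) - 1 - (m : ℝ) + (π ℓ : ℝ) / (2 * k) ∧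
      f ((ℓ - 1) * k + 2 * m + 2) = (k : ℝ) - 1 - (m : ℝ) + (π (ℓ + 1) : ℝ) / (2 * k))
    (hf3 : ∀ i, ℓ < i → i + 1 ≤ k → ∀ m < k,
      f (i * k + m + 1) =
        (if π (i + 1) < π i then (m : ℝ) else (k : ℝ) - 1 - (m : ℝ)) +
          (π (i + 1) : ℝ) / (2 * k))
    -- the intervals I_1, …, I_{k-1}
    (I : ℕ → Set ℕ)
    (hI1 : ∀ t, 1 ≤ t → t < ℓ → I t = Set.Icc ((t - 1) * k + 1) (t * k))
    (hI2 : I ℓ = Set.Icc ((ℓ - 1) * k + 1) ((ℓ + 1) * k))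
    (hI3 : ∀ t, ℓ < t → t ≤ k - 1 → I t = Set.Icc (t * k + 1) ((t + 1) * k)) :
    ∀ idx : ℕ → ℕ, StrictMonoOn idx (Set.Icc 1 k) →
      (∀ a ∈ Set.Icc 1 k, idx a ∈ Set.Icc 1 (k * k)) →
      (∀ a ∈ Set.Icc 1 k, ∀ b ∈ Set.Icc 1 k, (f (idx a) < f (idx b) ↔ π a < π b)) →
      ∀ a, 1 ≤ a → a ≤ k → ∀ t, 1 ≤ t → t ≤ k - 1 → idx a ∈ I t →
        (a ≤ ℓ → a ≤ t) ∧ (ℓ + 1 ≤ a → t ≤ a - 1) := by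
  intro idx hmono hrange hpat
  have hkpos : 0 < k := by omega
  -- general bounds for membership in I t
  have hub : ∀ t, 1 ≤ t → t ≤ k - 1 → ∀ x ∈ I t,
      x ≤ (t + 1) * k ∧ (t < ℓ → x ≤ t * k) := by
    intro t ht1 ht2 x hx
    rcases lt_trichotomy t ℓ with h | h | h
    · rw [hI1 t ht1 h, Set.mem_Icc] at hx
      have : t * k ≤ (t + 1) * k := Nat.mul_le_mul_right _ (by omega)
      exact ⟨by omega, fun _ => hx.2⟩
    · subst h
      rw [hI2, Set.mem_Icc] at hx
      exact ⟨hx.2, fun h => absurd h (lt_irrefl _)⟩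
    · rw [hI3 t h ht2, Set.mem_Icc] at hx
      exact ⟨hx.2, fun h' => absurd h' (by omega)⟩
  have hlb : ∀ t, 1 ≤ t → t ≤ k - 1 → ∀ x ∈ I t,
      (t - 1) * k + 1 ≤ x ∧ (ℓ < t → t * k + 1 ≤ x) := by
    intro t ht1 ht2 x hx
    rcases lt_trichotomy t ℓ with h | h | h
    · rw [hI1 t ht1 h, Set.mem_Icc] at hx
      exact ⟨hx.1, fun h' => absurd h' (by omega)⟩
    · subst h
      rw [hI2, Set.mem_Icc] at hx
      exact ⟨hx.1, fun h' => absurd h' (lt_irrefl _)⟩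
    · rw [hI3 t h ht2, Set.mem_Icc] at hx
      have : (t - 1) * k ≤ t * k := Nat.mul_le_mul_right _ (by omega)
      exact ⟨by omega, fun _ => hx.1⟩
  -- order lemma
  have horder : ∀ s t x y, 1 ≤ s → s ≤ k - 1 → 1 ≤ t → t ≤ k - 1 →
      x ∈ I s → y ∈ I t → x ≤ y → s ≤ t := by
    intro s t x y hs1 hs2 ht1 ht2 hx hy hxy
    by_contra h
    push_neg at h  -- t < s
    rcases le_or_gt s ℓ with hsl | hsl
    · -- t < s ≤ ℓ, so t < ℓ : y ≤ t*k ≤ (s-1)*k < x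
      have h1 : y ≤ t * k := (hub t ht1 ht2 y hy).2 (by omega)
      have h2 : (s - 1) * k + 1 ≤ x := (hlb s hs1 hs2 x hx).1
      have h3 : t * k ≤ (s - 1) * k := Nat.mul_le_mul_right _ (by omega)
      omega
    · -- ℓ < s : x ≥ s*k+1, y ≤ (t+1)*k ≤ s*k
      have h1 : y ≤ (t + 1) * k := (hub t ht1 ht2 y hy).1
      have h2 : s * k + 1 ≤ x := (hlb s hs1 hs2 x hx).2 hsl
      have h3 : (t + 1) * k ≤ s * k := Nat.mul_le_mul_right _ (by omega)
      omega
  -- existence: every point of [1, k²] lies in some interval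
  have hexist : ∀ x, 1 ≤ x → x ≤ k * k → ∃ t, 1 ≤ t ∧ t ≤ k - 1 ∧ x ∈ I t := by
    intro x hx1 hx2
    obtain ⟨q, r, hqr, hr⟩ : ∃ q r, k * q + r = x - 1 ∧ r < k :=
      ⟨(x - 1) / k, (x - 1) % k, Nat.div_add_mod _ _, Nat.mod_lt _ hkpos⟩
    rcases le_or_gt x ((ℓ - 1) * k) with hc1 | hc1
    · -- first regime : t = q + 1 < ℓ
      have hq : q < ℓ - 1 := by
        have h1 : k * q < k * (ℓ - 1) := by
          have : (ℓ - 1) * k = k * (ℓ - 1) := Nat.mul_comm _ _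
          omega
        exact Nat.lt_of_mul_lt_mul_left h1
      refine ⟨q + 1, by omega, by omega, ?_⟩
      rw [hI1 (q + 1) (by omega) (by omega), Set.mem_Icc]
      have e1 : (q + 1 - 1) * k = k * q := by
        simp [Nat.mul_comm]
      have e2 : (q + 1) * k = k * q + k := by ring
      omega
    · rcases le_or_gt x ((ℓ + 1) * k) with hc2 | hc2
      · -- middle regime : t = ℓ
        refine ⟨ℓ, hℓ1, by omega, ?_⟩
        rw [hI2, Set.mem_Icc]
        omega
      · -- last regime : t = q > ℓ
        have hq1 : ℓ < q := by
          have h1 : k * (ℓ + 1) < k * (q + 1) := by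
            have e : (ℓ + 1) * k = k * (ℓ + 1) := Nat.mul_comm _ _
            have e2 : k * (q + 1) = k * q + k := by ring
            omega
          have := Nat.lt_of_mul_lt_mul_left h1
          omega
        have hq2 : q ≤ k - 1 := by
          have h1 : k * q < k * k := by omega
          have := Nat.lt_of_mul_lt_mul_left h1
          omega
        refine ⟨q, by omega, hq2, ?_⟩
        rw [hI3 q hq1 hq2, Set.mem_Icc]
        have e1 : q * k = k * q := Nat.mul_comm _ _
        have e2 : (q + 1) * k = k * q + k := by ring
        omega
  -- claim 1 : a ≤ ℓ → idx a ∈ I t → a ≤ t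
  have claim1 : ∀ a, 1 ≤ a → a ≤ ℓ → ∀ t, 1 ≤ t → t ≤ k - 1 → idx a ∈ I t → a ≤ t := by
    intro a
    induction a with
    | zero => omega
    | succ n ih =>
      intro _ haℓ t ht1 ht2 hmem
      rcases Nat.eq_zero_or_pos n with hn | hn
      · omega
      by_contra hcon
      push_neg at hcon  -- t < n + 1, i.e. t ≤ n
      have hnk : n + 1 ≤ k := by omega
      have hmem1 : n ∈ Set.Icc 1 k := Set.mem_Icc.mpr ⟨hn, by omega⟩
      have hmem2 : n + 1 ∈ Set.Icc 1 k := Set.mem_Icc.mpr ⟨by omega, hnk⟩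
      obtain ⟨hr1, hr2⟩ := Set.mem_Icc.mp (hrange n hmem1)
      obtain ⟨t', ht'1, ht'2, hmem'⟩ := hexist (idx n) hr1 hr2
      have hnt' : n ≤ t' := ih hn (by omega) t' ht'1 ht'2 hmem'
      have hlt : idx n < idx (n + 1) := hmono hmem1 hmem2 (by omega)
      have ht't : t' ≤ t := horder t' t (idx n) (idx (n + 1)) ht'1 ht'2 ht1 ht2 hmem' hmem
        (le_of_lt hlt)
      have htn : t = n := by omega
      have ht'n : t' = n := by omega
      rw [htn] at hmem
      rw [ht'n] at hmem'
      -- both idx n and idx (n+1) lie in I n, n < ℓ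
      have hnℓ : n < ℓ := by omega
      rw [hI1 n hn hnℓ, Set.mem_Icc] at hmem hmem'
      set m₁ := idx n - ((n - 1) * k + 1) with hm₁def
      set m₂ := idx (n + 1) - ((n - 1) * k + 1) with hm₂def
      have ekk : n * k = (n - 1) * k + k := by
        obtain ⟨n', rfl⟩ : ∃ n', n = n' + 1 := ⟨n - 1, by omega⟩
        simp; ring
      have hm₁k : m₁ < k := by omega
      have hm₂k : m₂ < k := by omega
      have hm12 : m₁ < m₂ := by omega
      have e1 : idx n = (n - 1) * k + m₁ + 1 := by omega
      have e2 : idx (n + 1) = (n - 1) * k + m₂ + 1 := by omega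
      have hv1 : f (idx n) =
          (if π (n + 1) < π n then (m₁ : ℝ) else (k : ℝ) - 1 - (m₁ : ℝ)) + (π n : ℝ) / (2 * k) := by
        rw [e1]; exact hf1 n hn hnℓ m₁ hm₁k
      have hv2 : f (idx (n + 1)) =
          (if π (n + 1) < π n then (m₂ : ℝ) else (k : ℝ) - 1 - (m₂ : ℝ)) + (π n : ℝ) / (2 * k) := by
        rw [e2]; exact hf1 n hn hnℓ m₂ hm₂k
      by_cases hc : π (n + 1) < π n
      · have : f (idx n) < f (idx (n + 1)) := by
          rw [hv1, hv2, if_pos hc, if_pos hc]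
          have : (m₁ : ℝ) < (m₂ : ℝ) := by exact_mod_cast hm12
          linarith
        have := (hpat n hmem1 (n + 1) hmem2).mp this
        omega
      · have : f (idx (n + 1)) < f (idx n) := by
          rw [hv1, hv2, if_neg hc, if_neg hc]
          have : (m₁ : ℝ) < (m₂ : ℝ) := by exact_mod_cast hm12
          linarith
        have := (hpat (n + 1) hmem2 n hmem1).mp this
        omega
  -- claim 2 : ℓ + 1 ≤ a → idx a ∈ I t → t ≤ a - 1
  have claim2 : ∀ j a, ℓ + 1 ≤ a → a ≤ k → k - a ≤ j →
      ∀ t, 1 ≤ t → t ≤ k - 1 → idx a ∈ I t → t ≤ a - 1 := by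
    intro j
    induction j with
    | zero => intro a ha1 ha2 hj t ht1 ht2 _; omega
    | succ j ih =>
      intro a ha1 ha2 hj t ht1 ht2 hmem
      rcases Nat.eq_or_lt_of_le ha2 with hak | hak
      · omega
      by_contra hcon
      push_neg at hcon  -- a - 1 < t, i.e. a ≤ t
      have hmem1 : a ∈ Set.Icc 1 k := Set.mem_Icc.mpr ⟨by omega, ha2⟩
      have hmem2 : a + 1 ∈ Set.Icc 1 k := Set.mem_Icc.mpr ⟨by omega, hak⟩
      obtain ⟨hr1, hr2⟩ := Set.mem_Icc.mp (hrange (a + 1) hmem2)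
      obtain ⟨t', ht'1, ht'2, hmem'⟩ := hexist (idx (a + 1)) hr1 hr2
      have ht'a : t' ≤ a := by
        have := ih (a + 1) (by omega) hak (by omega) t' ht'1 ht'2 hmem'
        omega
      have hlt : idx a < idx (a + 1) := hmono hmem1 hmem2 (by omega)
      have htt' : t ≤ t' := horder t t' (idx a) (idx (a + 1)) ht1 ht2 ht'1 ht'2 hmem hmem'
        (le_of_lt hlt)
      have hta : t = a := by omega
      have ht'aeq : t' = a := by omega
      rw [hta] at hmem
      rw [ht'aeq] at hmem'
      have haℓ : ℓ < a := by omega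
      have hak1 : a ≤ k - 1 := by omega
      rw [hI3 a haℓ hak1, Set.mem_Icc] at hmem hmem'
      set m₁ := idx a - (a * k + 1) with hm₁def
      set m₂ := idx (a + 1) - (a * k + 1) with hm₂def
      have ekk : (a + 1) * k = a * k + k := by ring
      have hm₁k : m₁ < k := by omega
      have hm₂k : m₂ < k := by omega
      have hm12 : m₁ < m₂ := by omega
      have e1 : idx a = a * k + m₁ + 1 := by omega
      have e2 : idx (a + 1) = a * k + m₂ + 1 := by omega
      have hv1 : f (idx a) =
          (if π (a + 1) < π a then (m₁ : ℝ) else (k : ℝ) - 1 - (m₁ : ℝ)) +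
            (π (a + 1) : ℝ) / (2 * k) := by
        rw [e1]; exact hf3 a haℓ (by omega) m₁ hm₁k
      have hv2 : f (idx (a + 1)) =
          (if π (a + 1) < π a then (m₂ : ℝ) else (k : ℝ) - 1 - (m₂ : ℝ)) +
            (π (a + 1) : ℝ) / (2 * k) := by
        rw [e2]; exact hf3 a haℓ (by omega) m₂ hm₂k
      by_cases hc : π (a + 1) < π a
      · have : f (idx a) < f (idx (a + 1)) := by
          rw [hv1, hv2, if_pos hc, if_pos hc]
          have : (m₁ : ℝ) < (m₂ : ℝ) := by exact_mod_cast hm12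
          linarith
        have := (hpat a hmem1 (a + 1) hmem2).mp this
        omega
      · have : f (idx (a + 1)) < f (idx a) := by
          rw [hv1, hv2, if_neg hc, if_neg hc]
          have : (m₁ : ℝ) < (m₂ : ℝ) := by exact_mod_cast hm12
          linarith
        have := (hpat (a + 1) hmem2 a hmem1).mp this
        omega
  intro a ha1 ha2 t ht1 ht2 hmem
  exact ⟨fun haℓ => claim1 a ha1 haℓ t ht1 ht2 hmem,
    fun haℓ => claim2 (k - a) a haℓ ha2 le_rfl t ht1 ht2 hmem⟩
end
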